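/- The language L_2lin = { a^{2n} b^{2n} : n ≥ 1 } over the alphabet {a,b} is accepted by a repetitive deterministic finite automaton with translucent words (RDFAwtw). -/

import Mathlib

/-! Repetitive (non)deterministic finite automata with translucent words. -/

/-- Behavior of the automaton at the end-of-tape marker: halt accepting,
halt rejecting, or (in the repetitive case) continue in one of a set of states. -/
inductive EndBehavior (Q : Type) : Type where
  | accept : EndBehavior Q
  | reject : EndBehavior Q
  | cont : Set Q → EndBehavior Q

/-- `InStar S w` means `w` belongs to the Kleene star `S*` of the set of words `S`. -/
def InStar {α : Type} (S : Set (List α)) (w : List α) : Prop :=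
  ∃ l : List (List α), (∀ u ∈ l, u ∈ S) ∧ l.flatten = w

/-- A (repetitive) nondeterministic finite automaton with translucent words,
with state set `Q` over the alphabet `α`.  `tl q` is the set `τ(q)` of
translucent words of the state `q`, `delta` is the transition function and
`endB q` is the behavior at the end-of-tape marker.  The fields `tl_fin`,
`code_ne`, `prefix_code` and `tl_head` express that each `τ(q)` is finite,
that `τ(q) ∪ Σ_q` is a prefix code (no empty word, and no member is a proper
prefix of another member), and that no word of `τ(q)` begins with a letter
readable in `q`. -/
structure RNFAwtw (α : Type) (Q : Type) : Type where
  init : Set Q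
  tl : Q → Set (List α)
  delta : Q → α → Set Q
  endB : Q → EndBehavior Q
  tl_fin : ∀ q, (tl q).Finite
  code_ne : ∀ q, [] ∉ tl q
  prefix_code : ∀ q,
    ∀ u ∈ tl q ∪ {w | ∃ a, (delta q a).Nonempty ∧ w = [a]},
    ∀ v ∈ tl q ∪ {w | ∃ a, (delta q a).Nonempty ∧ w = [a]},
      u <+: v → u = v
  tl_head : ∀ q, ∀ t ∈ tl q, ∀ a, (delta q a).Nonempty → ¬ [a] <+: t

/-- Configurations: a pair of a state and the remaining tape content, or one
of the two halting configurations. -/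
inductive Conf (α Q : Type) : Type where
  | state : Q → List α → Conf α Q
  | accept : Conf α Q
  | reject : Conf α Q

/-- The single-step computation relation of an RNFAwtw. -/
inductive RNFAwtw.Step {α Q : Type} (A : RNFAwtw α Q) :
    Conf α Q → Conf α Q → Prop where
  | read {q q' : Q} {a : α} {u v : List α} :
      InStar (A.tl q) u → q' ∈ A.delta q a →
      RNFAwtw.Step A (Conf.state q (u ++ a :: v)) (Conf.state q' (u ++ v))
  | stuck {q : Q} {a : α} {u v : List α} :
      InStar (A.tl q) u → A.delta q a = ∅ →
      (∀ t ∈ A.tl q, ¬ t <+: (a :: v)) →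
      RNFAwtw.Step A (Conf.state q (u ++ a :: v)) Conf.reject
  | haltAccept {q : Q} {w : List α} :
      InStar (A.tl q) w → A.endB q = EndBehavior.accept →
      RNFAwtw.Step A (Conf.state q w) Conf.accept
  | haltReject {q : Q} {w : List α} :
      InStar (A.tl q) w → A.endB q = EndBehavior.reject →
      RNFAwtw.Step A (Conf.state q w) Conf.reject
  | goOn {q q' : Q} {w : List α} {S : Set Q} :
      InStar (A.tl q) w → A.endB q = EndBehavior.cont S → q' ∈ S →
      RNFAwtw.Step A (Conf.state q w) (Conf.state q' w)

/-- `A` accepts the word `w`. -/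
def RNFAwtw.Accepts {α Q : Type} (A : RNFAwtw α Q) (w : List α) : Prop :=
  ∃ q0 ∈ A.init, Relation.ReflTransGen A.Step (Conf.state q0 w) Conf.accept

/-- The language accepted by `A`. -/
def RNFAwtw.lang {α Q : Type} (A : RNFAwtw α Q) : Set (List α) :=
  { w | A.Accepts w }

/-- `A` is deterministic: one initial state, at most one transition per
state/letter pair, and at the end-of-tape marker the continuation (if any)
is a single state. -/
def RNFAwtw.Deterministic {α Q : Type} (A : RNFAwtw α Q) : Prop :=
  (∃ q0, A.init = {q0}) ∧
  (∀ q a, (A.delta q a).Subsingleton) ∧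
  (∀ q S, A.endB q = EndBehavior.cont S → ∃ q', S = {q'})

/-- `A` is non-repetitive: at the end-of-tape marker it always halts. -/
def RNFAwtw.NonRepetitive {α Q : Type} (A : RNFAwtw α Q) : Prop :=
  ∀ q S, A.endB q ≠ EndBehavior.cont S

/-- `L` is accepted by some repetitive NFAwtw (with a finite state set). -/
def AcceptedByRNFAwtw {α : Type} (L : Set (List α)) : Prop :=
  ∃ (Q : Type) (_ : Finite Q) (A : RNFAwtw α Q), A.lang = L

/-- `L` is accepted by some repetitive DFAwtw. -/
def AcceptedByRDFAwtw {α : Type} (L : Set (List α)) : Prop :=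
  ∃ (Q : Type) (_ : Finite Q) (A : RNFAwtw α Q), A.Deterministic ∧ A.lang = L

/-- `L` is accepted by some (non-repetitive) NFAwtw. -/
def AcceptedByNFAwtw {α : Type} (L : Set (List α)) : Prop :=
  ∃ (Q : Type) (_ : Finite Q) (A : RNFAwtw α Q), A.NonRepetitive ∧ A.lang = L

/-- `L` is accepted by some (non-repetitive) DFAwtw. -/
def AcceptedByDFAwtw {α : Type} (L : Set (List α)) : Prop :=
  ∃ (Q : Type) (_ : Finite Q) (A : RNFAwtw α Q),
    A.NonRepetitive ∧ A.Deterministic ∧ A.lang = L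

/-- The two-letter alphabet `{a, b}`. -/
inductive Letter : Type where
  | a : Letter
  | b : Letter
deriving DecidableEq

instance : Fintype Letter where
  elems := {Letter.a, Letter.b}
  complete := by intro x; cases x <;> simp

/-- The word `u^m` (the `m`-fold concatenation of `u`). -/
def wpow {α : Type} (u : List α) (m : ℕ) : List α :=
  (List.replicate m u).flatten

/-- `L_2lin = { a^{2n} b^{2n} : n ≥ 1 }`. -/
def L2lin : Set (List Letter) :=
  { w | ∃ n : ℕ, 1 ≤ n ∧
      w = List.replicate (2 * n) Letter.a ++ List.replicate (2 * n) Letter.b }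

/-! The automaton first checks that the input lies in `{aa, bb}*` and deletes its leading `aa`,
so that it reaches state `loop` on `a^{2k} b^{2k+2}`. A round of the loop deletes the first `a`,
then the second and the third `b`, then the next `a`, and checks `{aa, bb}*` again. The two `b`'s
are read behind the translucent words `{aa, ab}`, which can only carry the head past the first
`b` when the `a`-block in front of it has odd length. Since every word in `{aa, bb}*` has even
`a`-blocks, this pins down which letters a round deletes, and the invariant `a^{2k} b^{2k+2}`
propagates backwards along every accepting run. -/

namespace InStar

variable {α : Type} {S : Set (List α)}

theorem nil : InStar S [] := ⟨[], by simp, rfl⟩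

theorem append {u v : List α} : InStar S u → InStar S v → InStar S (u ++ v) := by
  rintro ⟨l, hl, rfl⟩ ⟨l', hl', rfl⟩
  exact ⟨l ++ l', fun t ht => (List.mem_append.1 ht).elim (hl t) (hl' t), by simp⟩

theorem of_mem {t : List α} (ht : t ∈ S) : InStar S t := ⟨[t], by simpa, by simp⟩

@[elab_as_elim]
theorem induction_on {P : List α → Prop} {w : List α} (hw : InStar S w) (nil : P [])
    (append : ∀ t ∈ S, ∀ w, InStar S w → P w → P (t ++ w)) : P w := by
  obtain ⟨l, hl, rfl⟩ := hw
  induction l with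
  | nil => exact nil
  | cons t l ih =>
    have hl' : ∀ u ∈ l, u ∈ S := fun u hu => hl u (List.mem_cons_of_mem t hu)
    exact append t (hl t List.mem_cons_self) _ ⟨l, hl', rfl⟩ (ih hl')

theorem eq_nil_or_append {w : List α} (hw : InStar S w) :
    w = [] ∨ ∃ t ∈ S, ∃ v, InStar S v ∧ w = t ++ v :=
  hw.induction_on (.inl rfl) fun t ht v hv _ => .inr ⟨t, ht, v, hv, rfl⟩

@[simp]
theorem empty_iff {w : List α} : InStar ∅ w ↔ w = [] :=
  ⟨fun hw => hw.induction_on rfl fun _ ht => absurd ht (Set.notMem_empty _), fun h => h ▸ nil⟩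

theorem replicate_two_mul {x : α} (hx : [x, x] ∈ S) (k : ℕ) :
    InStar S (List.replicate (2 * k) x) := by
  induction k with
  | zero => exact nil
  | succ k ih =>
    rw [Nat.mul_succ, List.replicate_add]
    simpa using append ih (of_mem hx)

end InStar

theorem List.replicate_append_cons_inj {α : Type} {x y : α} (hxy : x ≠ y) {m n : ℕ}
    {u v : List α} (h : List.replicate m x ++ y :: u = List.replicate n x ++ y :: v) :
    m = n ∧ u = v := by
  induction m generalizing n with
  | zero => cases n <;> simp_all [List.replicate_succ, eq_comm]
  | succ m ih => cases n <;> simp_all [List.replicate_succ]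

namespace RNFAwtw

variable {α Q : Type} (A : RNFAwtw α Q)

def AcceptsFrom (q : Q) (w : List α) : Prop :=
  Relation.ReflTransGen A.Step (Conf.state q w) Conf.accept

theorem not_reflTransGen_reject_accept : ¬ Relation.ReflTransGen A.Step .reject .accept := by
  intro h
  rcases h.cases_head with h | ⟨_, h, _⟩ <;> cases h

theorem acceptsFrom_iff {q : Q} {w : List α} : A.AcceptsFrom q w ↔
    (∃ u x v, InStar (A.tl q) u ∧ w = u ++ x :: v ∧
      ∃ q' ∈ A.delta q x, A.AcceptsFrom q' (u ++ v)) ∨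
    InStar (A.tl q) w ∧
      (A.endB q = .accept ∨ ∃ S, A.endB q = .cont S ∧ ∃ q' ∈ S, A.AcceptsFrom q' w) := by
  constructor
  · intro h
    rcases h.cases_head with h | ⟨c, hs, hc⟩
    · cases h
    cases hs with
    | read hu hq => exact .inl ⟨_, _, _, hu, rfl, _, hq, hc⟩
    | stuck => exact absurd hc (A.not_reflTransGen_reject_accept)
    | haltAccept hw he => exact .inr ⟨hw, .inl he⟩
    | haltReject => exact absurd hc (A.not_reflTransGen_reject_accept)
    | goOn hw he hq => exact .inr ⟨hw, .inr ⟨_, he, _, hq, hc⟩⟩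
  · rintro (⟨u, x, v, hu, rfl, q', hq, hc⟩ | ⟨hw, he | ⟨S, he, q', hq, hc⟩⟩)
    · exact .head (.read hu hq) hc
    · exact .single (.haltAccept hw he)
    · exact .head (.goOn hw he hq) hc

theorem accepts_iff_of_init_eq {q₀ : Q} (h : A.init = {q₀}) {w : List α} :
    A.Accepts w ↔ A.AcceptsFrom q₀ w := by
  simp [Accepts, AcceptsFrom, h]

end RNFAwtw

theorem prefix_free_union_singletons {α : Type} {T : Set (List α)} {P : α → Prop}
    (hne : [] ∉ T) (hT : ∀ u ∈ T, ∀ v ∈ T, u <+: v → u = v)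
    (hhead : ∀ t ∈ T, ∀ x, P x → ¬ [x] <+: t) :
    ∀ u ∈ T ∪ {w | ∃ x, P x ∧ w = [x]}, ∀ v ∈ T ∪ {w | ∃ x, P x ∧ w = [x]},
      u <+: v → u = v := by
  rintro u (hu | ⟨x, hx, rfl⟩) v (hv | ⟨y, -, rfl⟩) h
  · exact hT u hu v hv h
  · rcases List.prefix_cons_iff.1 h with rfl | ⟨t, rfl, ht⟩
    · exact absurd hu hne
    · simp_all
  · exact absurd h (hhead v hv x hx)
  · exact h.eq_of_length rfl

theorem Letter.exists {p : Letter → Prop} : (∃ x, p x) ↔ p .a ∨ p .b :=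
  ⟨fun ⟨x, hx⟩ => by cases x <;> simp_all, fun h => h.elim (⟨_, ·⟩) (⟨_, ·⟩)⟩

namespace L2linAutomaton

open Letter List

inductive State : Type where
  | start | dropA₁ | dropA₂ | loop | lastB | final | delB₁ | delB₂ | delA | recheck
deriving DecidableEq

open State

instance : Fintype State where
  elems := {start, dropA₁, dropA₂, loop, lastB, final, delB₁, delB₂, delA, recheck}
  complete q := by cases q <;> simp

def aaOrBb : Set (List Letter) := {[a, a], [b, b]}

def aaOrAb : Set (List Letter) := {[a, a], [a, b]}

def tl : State → Set (List Letter)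
  | start | recheck => aaOrBb
  | delB₁ | delB₂ => aaOrAb
  | _ => ∅

def delta : State → Letter → Set State
  | dropA₁, a => {dropA₂}
  | dropA₂, a => {loop}
  | loop, a => {delB₁}
  | loop, b => {lastB}
  | lastB, b => {final}
  | delB₁, b => {delB₂}
  | delB₂, b => {delA}
  | delA, a => {recheck}
  | _, _ => ∅

def endB : State → EndBehavior State
  | start => .cont {dropA₁}
  | recheck => .cont {loop}
  | final => .accept
  | _ => .reject

theorem length_of_mem_tl {q : State} {t : List Letter} (ht : t ∈ tl q) : t.length = 2 := by
  cases q <;> simp_all [tl, aaOrBb, aaOrAb] <;> rcases ht with rfl | rfl <;> rfl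

theorem not_prefix_of_mem_tl {q : State} {t : List Letter} (ht : t ∈ tl q) {x : Letter}
    (hx : (delta q x).Nonempty) : ¬ [x] <+: t := by
  cases q <;> cases x <;> simp_all [tl, delta, aaOrBb, aaOrAb] <;>
    rcases ht with rfl | rfl <;> simp

def M : RNFAwtw Letter State where
  init := {start}
  tl := tl
  delta := delta
  endB := endB
  tl_fin q := by cases q <;> simp [tl, aaOrBb, aaOrAb]
  code_ne q h := by simpa using length_of_mem_tl h
  prefix_code q := prefix_free_union_singletons (fun h => by simpa using length_of_mem_tl h)
    (fun u hu v hv h => h.eq_of_length (by rw [length_of_mem_tl hu, length_of_mem_tl hv]))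
    (fun _ ht _ hx => not_prefix_of_mem_tl ht hx)
  tl_head _ _ ht _ hx := not_prefix_of_mem_tl ht hx

theorem M_tl : M.tl = tl := rfl

theorem M_delta : M.delta = delta := rfl

theorem M_endB : M.endB = endB := rfl

theorem M_deterministic : M.Deterministic := by
  refine ⟨⟨start, rfl⟩, fun q x => ?_, fun q S h => ?_⟩
  · cases q <;> cases x <;> simp [M_delta, delta]
  · cases q <;> simp [M_endB, endB] at h <;> exact ⟨_, h.symm⟩

variable {w : List Letter}

theorem acceptsFrom_start :
    M.AcceptsFrom start w ↔ InStar aaOrBb w ∧ M.AcceptsFrom dropA₁ w := by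
  rw [M.acceptsFrom_iff]; simp [M_tl, M_delta, M_endB, tl, delta, endB]

theorem acceptsFrom_dropA₁ :
    M.AcceptsFrom dropA₁ w ↔ ∃ v, w = a :: v ∧ M.AcceptsFrom dropA₂ v := by
  rw [M.acceptsFrom_iff]; simp [M_tl, M_delta, M_endB, tl, delta, endB, Letter.exists]

theorem acceptsFrom_dropA₂ :
    M.AcceptsFrom dropA₂ w ↔ ∃ v, w = a :: v ∧ M.AcceptsFrom loop v := by
  rw [M.acceptsFrom_iff]; simp [M_tl, M_delta, M_endB, tl, delta, endB, Letter.exists]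

theorem acceptsFrom_final : M.AcceptsFrom final w ↔ w = [] := by
  rw [M.acceptsFrom_iff]; simp [M_tl, M_delta, M_endB, tl, delta, endB]

theorem acceptsFrom_lastB : M.AcceptsFrom lastB w ↔ w = [b] := by
  rw [M.acceptsFrom_iff]
  simp [M_tl, M_delta, M_endB, tl, delta, endB, Letter.exists, acceptsFrom_final]

theorem acceptsFrom_loop : M.AcceptsFrom loop w ↔
    (∃ v, w = a :: v ∧ M.AcceptsFrom delB₁ v) ∨ w = [b, b] := by
  rw [M.acceptsFrom_iff]
  simp [M_tl, M_delta, M_endB, tl, delta, endB, Letter.exists, acceptsFrom_lastB]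

theorem acceptsFrom_delB₁ : M.AcceptsFrom delB₁ w ↔
    ∃ u v, InStar aaOrAb u ∧ w = u ++ b :: v ∧ M.AcceptsFrom delB₂ (u ++ v) := by
  rw [M.acceptsFrom_iff]; simp [M_tl, M_delta, M_endB, tl, delta, endB, Letter.exists]

theorem acceptsFrom_delB₂ : M.AcceptsFrom delB₂ w ↔
    ∃ u v, InStar aaOrAb u ∧ w = u ++ b :: v ∧ M.AcceptsFrom delA (u ++ v) := by
  rw [M.acceptsFrom_iff]; simp [M_tl, M_delta, M_endB, tl, delta, endB, Letter.exists]

theorem acceptsFrom_delA :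
    M.AcceptsFrom delA w ↔ ∃ v, w = a :: v ∧ M.AcceptsFrom recheck v := by
  rw [M.acceptsFrom_iff]; simp [M_tl, M_delta, M_endB, tl, delta, endB, Letter.exists]

theorem acceptsFrom_recheck :
    M.AcceptsFrom recheck w ↔ InStar aaOrBb w ∧ M.AcceptsFrom loop w := by
  rw [M.acceptsFrom_iff]; simp [M_tl, M_delta, M_endB, tl, delta, endB]

theorem aaOrBb_star_replicate (k m : ℕ) :
    InStar aaOrBb (replicate (2 * k) a ++ replicate (2 * m) b) :=
  (InStar.replicate_two_mul (by simp [aaOrBb]) k).append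
    (InStar.replicate_two_mul (by simp [aaOrBb]) m)

theorem aaOrAb_star_replicate (k : ℕ) : InStar aaOrAb (replicate (2 * k + 1) a ++ [b]) := by
  simpa [replicate_succ'] using
    (InStar.replicate_two_mul (by simp [aaOrAb]) k).append (InStar.of_mem (by simp [aaOrAb]))

theorem aaOrBb_star_of_aa_cons (h : InStar aaOrBb (a :: a :: w)) :
    InStar aaOrBb w := by
  rcases h.eq_nil_or_append with h | ⟨t, rfl | rfl, v, hv, h⟩ <;> simp_all

theorem even_of_aaOrBb_star {n : ℕ} {y : List Letter}
    (h : InStar aaOrBb (replicate n a ++ b :: y)) : Even n := by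
  refine h.induction_on (P := fun v => ∀ n, v = replicate n a ++ b :: y → Even n)
    (by simp) ?_ n rfl
  rintro t (rfl | rfl) v - ih (_ | _ | n) hn <;> simp_all [replicate_succ, Nat.even_add]

theorem aaOrAb_star_cases {u : List Letter} (hu : InStar aaOrAb u) :
    (∃ r, u = replicate (2 * r) a) ∨
      ∃ r u', InStar aaOrAb u' ∧ u = replicate (2 * r + 1) a ++ b :: u' := by
  refine hu.induction_on (.inl ⟨0, rfl⟩) ?_
  rintro t (rfl | rfl) v hv (⟨r, rfl⟩ | ⟨r, u', hu', rfl⟩)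
  · exact .inl ⟨r + 1, by simp [Nat.mul_succ, replicate_succ]⟩
  · exact .inr ⟨r + 1, u', hu', by simp [Nat.mul_succ, replicate_succ]⟩
  all_goals exact .inr ⟨0, _, hv, rfl⟩

theorem eq_nil_of_aaOrAb_star {u v : List Letter} {m : ℕ} (hu : InStar aaOrAb u)
    (h : u ++ v = replicate m b) : u = [] := by
  rcases hu.eq_nil_or_append with rfl | ⟨t, rfl | rfl, v, -, rfl⟩
  · rfl
  all_goals cases m <;> simp [replicate_succ] at h

theorem exists_odd_run_of_aaOrBb_star {u v : List Letter} (hu : InStar aaOrAb u)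
    (hw : InStar aaOrBb (a :: (u ++ b :: v))) :
    ∃ r u', u = replicate (2 * r + 1) a ++ b :: u' := by
  rcases aaOrAb_star_cases hu with ⟨r, rfl⟩ | ⟨r, u', -, rfl⟩
  · have := even_of_aaOrBb_star (n := 2 * r + 1) (y := v) (by simpa [replicate_succ] using hw)
    simp at this
  · exact ⟨r, u', rfl⟩

theorem insert_b_eq_of_aaOrAb_star {u v z : List Letter} {r k m : ℕ} (hu : InStar aaOrAb u)
    (hodd : u ++ b :: v = replicate (2 * r + 1) a ++ b :: z)
    (h : u ++ v = replicate (2 * k + 1) a ++ replicate (m + 1) b) :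
    u ++ b :: v = replicate (2 * k + 1) a ++ replicate (m + 2) b := by
  rcases aaOrAb_star_cases hu with ⟨s, rfl⟩ | ⟨s, u', hu', rfl⟩
  · have := (replicate_append_cons_inj (by decide) hodd).1
    omega
  · rw [append_assoc, cons_append, replicate_succ (a := b) (n := m)] at h
    obtain ⟨hs, h⟩ := replicate_append_cons_inj (by decide) h
    obtain rfl := eq_nil_of_aaOrAb_star hu' h
    simp_all [replicate_succ]

theorem acceptsFrom_loop_replicate (k : ℕ) :
    M.AcceptsFrom loop (replicate (2 * k) a ++ replicate (2 * k + 2) b) := by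
  induction k with
  | zero => simp [acceptsFrom_loop]
  | succ k ih =>
    rw [acceptsFrom_loop]
    refine .inl ⟨replicate (2 * k + 1) a ++ replicate (2 * k + 4) b,
      by simp [Nat.mul_succ, replicate_succ], ?_⟩
    rw [acceptsFrom_delB₁]
    refine ⟨_, replicate (2 * k + 2) b, aaOrAb_star_replicate k, by simp [replicate_succ], ?_⟩
    rw [acceptsFrom_delB₂]
    refine ⟨_, replicate (2 * k + 1) b, aaOrAb_star_replicate k, by simp [replicate_succ], ?_⟩
    rw [acceptsFrom_delA]
    refine ⟨replicate (2 * k) a ++ replicate (2 * k + 2) b, by simp [replicate_succ], ?_⟩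
    rw [acceptsFrom_recheck]
    exact ⟨aaOrBb_star_replicate k (k + 1), ih⟩

theorem eq_of_acceptsFrom_loop (hw : InStar aaOrBb w)
    (h : M.AcceptsFrom loop w) : ∃ k, w = replicate (2 * k) a ++ replicate (2 * k + 2) b := by
  induction hn : w.length using Nat.strong_induction_on generalizing w with | _ n ih => ?_
  rcases acceptsFrom_loop.1 h with ⟨x₁, rfl, h₁⟩ | rfl
  case inr => exact ⟨0, rfl⟩
  obtain ⟨u₁, v₁, hu₁, rfl, h₂⟩ := acceptsFrom_delB₁.1 h₁
  obtain ⟨u₂, v₂, hu₂, hx₂, h₃⟩ := acceptsFrom_delB₂.1 h₂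
  obtain ⟨w', hx₃, h₄⟩ := acceptsFrom_delA.1 h₃
  obtain ⟨hw', h'⟩ := acceptsFrom_recheck.1 h₄
  have hlen : w'.length < n := by
    have := congrArg length hx₂
    have := congrArg length hx₃
    simp only [length_append, length_cons] at *
    omega
  obtain ⟨k, rfl⟩ := ih _ hlen hw' h' rfl
  obtain ⟨r, u', rfl⟩ := exists_odd_run_of_aaOrBb_star hu₁ hw
  have hx₂' : u₂ ++ b :: v₂ = replicate (2 * k + 1) a ++ replicate (2 * k + 3) b :=
    insert_b_eq_of_aaOrAb_star hu₂ (r := r) (z := u' ++ v₁) (hx₂.symm.trans (by simp))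
      (by simp [hx₃, replicate_succ])
  have hx₁ : replicate (2 * r + 1) a ++ b :: u' ++ b :: v₁ =
      replicate (2 * k + 1) a ++ replicate (2 * k + 4) b :=
    insert_b_eq_of_aaOrAb_star hu₁ (r := r) (z := u' ++ b :: v₁) (by simp) (hx₂.trans hx₂')
  exact ⟨k + 1, by rw [hx₁]; simp [Nat.mul_succ, replicate_succ]⟩

theorem lang_M : M.lang = L2lin := by
  ext w
  simp only [RNFAwtw.lang, Set.mem_ofPred_eq, M.accepts_iff_of_init_eq rfl, acceptsFrom_start,
    acceptsFrom_dropA₁, acceptsFrom_dropA₂]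
  constructor
  · rintro ⟨hw, _, rfl, _, rfl, h⟩
    obtain ⟨k, rfl⟩ := eq_of_acceptsFrom_loop (aaOrBb_star_of_aa_cons hw) h
    exact ⟨k + 1, by omega, by simp [Nat.mul_succ, replicate_succ]⟩
  · rintro ⟨n, hn, rfl⟩
    obtain ⟨k, rfl⟩ := Nat.exists_eq_add_of_le' hn
    refine ⟨by simpa using aaOrBb_star_replicate (k + 1) (k + 1),
      a :: (replicate (2 * k) a ++ replicate (2 * k + 2) b), by simp [Nat.mul_succ, replicate_succ],
      _, rfl, acceptsFrom_loop_replicate k⟩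

end L2linAutomaton

/-- The language `L_2lin = { a^{2n} b^{2n} : n ≥ 1 }` is accepted by a
repetitive deterministic finite automaton with translucent words. -/
theorem L2lin_accepted_by_RDFAwtw : AcceptedByRDFAwtw L2lin :=
  ⟨_, inferInstance, L2linAutomaton.M, L2linAutomaton.M_deterministic, L2linAutomaton.lang_M⟩
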